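/- Let k be a field of characteristic zero not containing a primitive 8th root of unity ε₈. Then the diagonal matrix diag(a, aε₈⁶, aε₈, aε₈⁴) ∈ GL₄(k̄), for any nonzero a ∈ k̄, is not conjugate over k̄ to any matrix in GL₄(k). -/

import Mathlib

/-!
Conjugation preserves traces, so every power sum `a^m + (aε⁶)^m + (aε)^m + (aε⁴)^m`, being
`tr(B^m)`, lies in `k`. Since `ε⁴ = -1`, the power sums for `m = 1, 2, 4` are `a(ε - ε²)`,
`a²(1 + ε²)` and `2a⁴`, and rational expressions in these recover `ε²`, then `a²`, then `ε³`,
hence `ε = ε³ / ε²` lies in `k`.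
-/

theorem Matrix.trace_pow_units_conj_map {n R S : Type*} [Fintype n] [DecidableEq n]
    [CommSemiring R] [CommSemiring S] (f : R →+* S) (P : (Matrix n n S)ˣ) (B : Matrix n n R)
    (m : ℕ) :
    trace (((P : Matrix n n S) * B.map f * (↑P⁻¹ : Matrix n n S)) ^ m) = f (trace (B ^ m)) := by
  rw [Units.conj_pow, trace_units_conj, AddMonoidHom.map_trace f, Matrix.map_pow]

theorem IsPrimitiveRoot.pow_four_eq_neg_one {R : Type*} [CommRing R] [NoZeroDivisors R] {ε : R}
    (hε : IsPrimitiveRoot ε 8) : ε ^ 4 = -1 :=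
  (hε.pow_of_dvd (by norm_num) (by norm_num : 4 ∣ 8)).eq_neg_one_of_two_right

namespace Subfield

variable {F : Type*} [Field F] (L : Subfield F) {ε a : F}

theorem mem_of_pow_four_eq_neg_one (h2 : (2 : F) ≠ 0) (hε : ε ^ 4 = -1) (ha : a ≠ 0)
    (hs : a * (ε - ε ^ 2) ∈ L) (hq : a ^ 2 * (1 + ε ^ 2) ∈ L) (hr : 2 * a ^ 4 ∈ L) : ε ∈ L := by
  have hε2 : ε ^ 2 ∈ L := by
    have e : ε ^ 2 = (a ^ 2 * (1 + ε ^ 2)) ^ 2 / (2 * a ^ 4) := by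
      rw [eq_div_iff (mul_ne_zero h2 (pow_ne_zero 4 ha))]; linear_combination -a ^ 4 * hε
    exact e ▸ div_mem (pow_mem hq 2) hr
  have ha2 : a ^ 2 ∈ L := by
    have h1ε2 : 1 + ε ^ 2 ≠ 0 := fun h ↦ h2 (by linear_combination (1 - ε ^ 2) * h + hε)
    have e : a ^ 2 = a ^ 2 * (1 + ε ^ 2) / (1 + ε ^ 2) := by field_simp
    exact e ▸ div_mem hq (add_mem (one_mem L) hε2)
  have hε3 : ε ^ 3 ∈ L := by
    have e : ε ^ 3 = (a ^ 2 * ε ^ 2 - a ^ 2 - (a * (ε - ε ^ 2)) ^ 2) / (2 * a ^ 2) := by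
      rw [eq_div_iff (mul_ne_zero h2 (pow_ne_zero 2 ha))]; linear_combination a ^ 2 * hε
    exact e ▸ div_mem (sub_mem (sub_mem (mul_mem ha2 hε2) ha2) (pow_mem hs 2))
      (mul_mem (ofNat_mem L 2) ha2)
  have hε0 : ε ≠ 0 := by rintro rfl; norm_num at hε
  have e : ε = ε ^ 3 / ε ^ 2 := by field_simp
  exact e ▸ div_mem hε3 hε2

theorem mem_of_power_sums_mem (h2 : (2 : F) ≠ 0) (hε : ε ^ 4 = -1) (ha : a ≠ 0)
    (hp : ∀ m : ℕ, a ^ m + (a * ε ^ 6) ^ m + (a * ε) ^ m + (a * ε ^ 4) ^ m ∈ L) : ε ∈ L := by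
  have p1 : a ^ 1 + (a * ε ^ 6) ^ 1 + (a * ε) ^ 1 + (a * ε ^ 4) ^ 1 = a * (ε - ε ^ 2) := by
    linear_combination (a + a * ε ^ 2) * hε
  have p2 : a ^ 2 + (a * ε ^ 6) ^ 2 + (a * ε) ^ 2 + (a * ε ^ 4) ^ 2 = a ^ 2 * (1 + ε ^ 2) := by
    linear_combination a ^ 2 * ε ^ 8 * hε
  have p4 : a ^ 4 + (a * ε ^ 6) ^ 4 + (a * ε) ^ 4 + (a * ε ^ 4) ^ 4 = 2 * a ^ 4 := by
    linear_combination a ^ 4 * (ε ^ 20 - ε ^ 16 + 2 * ε ^ 12 - 2 * ε ^ 8 + 2 * ε ^ 4 - 1) * hε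
  exact L.mem_of_pow_four_eq_neg_one h2 hε ha (p1 ▸ hp 1) (p2 ▸ hp 2) (p4 ▸ hp 4)

end Subfield

theorem stmt2 (k : Type*) [Field k] [CharZero k]
    (hk : ¬ ∃ x : k, IsPrimitiveRoot x 8)
    (ε : AlgebraicClosure k) (hε : IsPrimitiveRoot ε 8)
    (a : AlgebraicClosure k) (ha : a ≠ 0) :
    ¬ ∃ (P : (Matrix (Fin 4) (Fin 4) (AlgebraicClosure k))ˣ)
        (B : Matrix (Fin 4) (Fin 4) k),
      Matrix.diagonal ![a, a * ε ^ 6, a * ε, a * ε ^ 4] =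
        (P : Matrix (Fin 4) (Fin 4) (AlgebraicClosure k)) *
          (B.map (algebraMap k (AlgebraicClosure k))) *
          ((P⁻¹ : (Matrix (Fin 4) (Fin 4) (AlgebraicClosure k))ˣ) :
            Matrix (Fin 4) (Fin 4) (AlgebraicClosure k)) := by
  rintro ⟨P, B, hPB⟩
  set f := algebraMap k (AlgebraicClosure k)
  have power_sum_mem (m : ℕ) :
      a ^ m + (a * ε ^ 6) ^ m + (a * ε) ^ m + (a * ε ^ 4) ^ m ∈ f.fieldRange := by
    have h := Matrix.trace_pow_units_conj_map f P B m
    rw [← hPB, Matrix.diagonal_pow, Matrix.trace_diagonal, Fin.sum_univ_four] at h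
    exact ⟨_, by simpa using h.symm⟩
  obtain ⟨x, rfl⟩ := f.fieldRange.mem_of_power_sums_mem two_ne_zero hε.pow_four_eq_neg_one ha
    power_sum_mem
  exact hk ⟨x, hε.of_map_of_injective f.injective⟩
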